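/- Let 𝒢 be a groupoid and β a normalized U(1)-valued 2-cocycle on 𝒢. Then the transgression t(β), defined on morphisms of the loop groupoid Λ𝒢 by t(β)(g → h) := β(h, h⁻¹gh) · β(g,h)⁻¹ for g ∈ End_𝒢(X) and h : X → Y, is a normalized groupoid 1-cocycle on Λ𝒢: t(β)(g → h) · t(β)(h⁻¹gh → h') = t(β)(g → hh') for every g ∈ End_𝒢(X) and composable h : X → Y, h' : Y → Z, and t(β)(g → id_X) = 1. -/

import Mathlib

open CategoryTheory

/-- A normalized `U(1)`-valued 2-cocycle on a groupoid `G`. -/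
structure TwoCocycle (G : Type) [Groupoid.{0} G] : Type where
  toFun : ∀ {X Y Z : G}, (X ⟶ Y) → (Y ⟶ Z) → ℂ
  abs_toFun : ∀ {X Y Z : G} (f : X ⟶ Y) (g : Y ⟶ Z), ‖toFun f g‖ = 1
  cocycle : ∀ {X Y Z W : G} (f : X ⟶ Y) (g : Y ⟶ Z) (h : Z ⟶ W),
    toFun g h * toFun f (g ≫ h) = toFun (f ≫ g) h * toFun f g
  id_left : ∀ {X Y : G} (g : X ⟶ Y), toFun (𝟙 X) g = 1
  id_right : ∀ {X Y : G} (g : X ⟶ Y), toFun g (𝟙 Y) = 1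

/-- Conjugation `h⁻¹ g h` of a loop `g ∈ End(X)` by a morphism `h : X ⟶ Y`. -/
def cnj {G : Type} [Groupoid.{0} G] {X Y : G} (g : X ⟶ X) (h : X ⟶ Y) : Y ⟶ Y :=
  Groupoid.inv h ≫ g ≫ h

/-- The `S¹`-transgression `t(β)(g → h) = β(h, h⁻¹gh) β(g,h)⁻¹` of a 2-cocycle `β`,
evaluated on the morphism `(g → h)` of the loop groupoid `Λ𝒢`. -/
noncomputable def tBeta {G : Type} [Groupoid.{0} G] (β : TwoCocycle G)
    {X Y : G} (g : X ⟶ X) (h : X ⟶ Y) : ℂ :=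
  β.toFun h (cnj g h) * (β.toFun g h)⁻¹

/-!
With `k = h⁻¹gh` and `m = (hh')⁻¹g(hh')` the squares `gh = hk` and `kh' = h'm` commute. Along
them, the cocycle relations for `(g, h, h')`, `(h, k, h')` and `(h, h', m)` combine to
`β(h,k) β(h',m) β(g,hh') = β(g,h) β(k,h') β(hh',m)`, which is the cocycle condition for `t(β)`
once the (nonzero) values of `β` are divided out.
-/

namespace TwoCocycle

variable {G : Type} [Groupoid.{0} G] (β : TwoCocycle G)

theorem toFun_ne_zero {X Y Z : G} (f : X ⟶ Y) (g : Y ⟶ Z) : β.toFun f g ≠ 0 := fun h0 => by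
  simpa [h0] using β.abs_toFun f g

theorem toFun_mul_of_comm {X Y Z : G} {g : X ⟶ X} {h : X ⟶ Y} {k : Y ⟶ Y} {h' : Y ⟶ Z}
    {m : Z ⟶ Z} (hk : g ≫ h = h ≫ k) (hm : k ≫ h' = h' ≫ m) :
    β.toFun h k * β.toFun h' m * β.toFun g (h ≫ h') =
      β.toFun g h * β.toFun k h' * β.toFun (h ≫ h') m := by
  have c₁ := β.cocycle g h h'
  have c₂ := β.cocycle h k h'
  have c₃ := β.cocycle h h' m
  rw [← hk] at c₂
  rw [← hm] at c₃
  refine mul_left_cancel₀ (mul_ne_zero (β.toFun_ne_zero h (k ≫ h')) (β.toFun_ne_zero h h')) ?_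
  linear_combination (β.toFun h k * β.toFun g (h ≫ h') * β.toFun h h') * c₃
    + (β.toFun h k * β.toFun (h ≫ h') m * β.toFun h h') * c₁
    - (β.toFun g h * β.toFun (h ≫ h') m * β.toFun h h') * c₂

end TwoCocycle

section Conjugation

variable {G : Type} [Groupoid.{0} G]

theorem comp_cnj {X Y : G} (g : X ⟶ X) (h : X ⟶ Y) : h ≫ cnj g h = g ≫ h := by
  simp [cnj]

theorem cnj_comp {X Y Z : G} (g : X ⟶ X) (h : X ⟶ Y) (h' : Y ⟶ Z) :
    cnj g (h ≫ h') = cnj (cnj g h) h' := by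
  simp [cnj]

theorem cnj_id {X : G} (g : X ⟶ X) : cnj g (𝟙 X) = g := by
  simp [cnj]

end Conjugation

section Transgression

variable {G : Type} [Groupoid.{0} G] (β : TwoCocycle G)

theorem tBeta_mul_tBeta {X Y Z : G} (g : X ⟶ X) (h : X ⟶ Y) (h' : Y ⟶ Z) :
    tBeta β g h * tBeta β (cnj g h) h' = tBeta β g (h ≫ h') := by
  have key := β.toFun_mul_of_comm (comp_cnj g h).symm (comp_cnj (cnj g h) h').symm
  have := β.toFun_ne_zero g h
  have := β.toFun_ne_zero (cnj g h) h'
  have := β.toFun_ne_zero g (h ≫ h')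
  rw [tBeta, tBeta, tBeta, cnj_comp]
  field_simp
  linear_combination key

theorem tBeta_id {X : G} (g : X ⟶ X) : tBeta β g (𝟙 X) = 1 := by
  simp [tBeta, cnj_id, β.id_left, β.id_right]

end Transgression

/-- The transgression `t(β)` of a normalized 2-cocycle `β` on a groupoid
`𝒢` is a normalized 1-cocycle on the loop groupoid `Λ𝒢`. -/
theorem tBeta_oneCocycle
    (G : Type) [Groupoid.{0} G] (β : TwoCocycle G) :
    (∀ (X Y Z : G) (g : X ⟶ X) (h : X ⟶ Y) (h' : Y ⟶ Z),
      tBeta β g h * tBeta β (cnj g h) h' = tBeta β g (h ≫ h')) ∧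
    (∀ (X : G) (g : X ⟶ X), tBeta β g (𝟙 X) = 1) :=
  ⟨fun _ _ _ => tBeta_mul_tBeta β, fun _ => tBeta_id β⟩
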